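/- arXiv:1702.07261 — 2 statements merged into one kernel-verified Lean document; each statement's English description precedes it below -/
import Mathlib

section
/- An element x ∈ R̂ has a multiplicative inverse (with respect to ⋆) if and only if x is not infinitesimal; in that case its inverse is the sequence n ↦ 1/(lim x) − (x_n − lim x)/(lim x)², which is itself convergent. -/
/-! Taking limits is multiplicative for `⋆`, so `x ⋆ y = 1` forces `lim x ≠ 0`. Conversely, `⋆`
only sees each factor to first order around its limit, so the linearization of `t ↦ 1 / t` at
`lim x`, evaluated along `x`, is already an inverse. -/

open Filter Topology

def Converges (x : ℕ → ℝ) : Prop := ∃ l : ℝ, Filter.Tendsto x Filter.atTop (nhds l)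

def Rhat : Type := {x : ℕ → ℝ // Converges x}

noncomputable def slim (x : Rhat) : ℝ := limUnder atTop x.1

theorem slim_tendsto (x : Rhat) : Tendsto x.1 atTop (nhds (slim x)) := by
  obtain ⟨l, hl⟩ := x.2
  rw [show slim x = l from hl.limUnder_eq]
  exact hl

noncomputable def hadd (x y : Rhat) : Rhat :=
  ⟨fun n => x.1 n + y.1 n, ⟨slim x + slim y, (slim_tendsto x).add (slim_tendsto y)⟩⟩

noncomputable def hmul (x y : Rhat) : Rhat :=
  ⟨fun n => slim x * y.1 n + slim y * x.1 n - slim x * slim y,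
   ⟨slim x * slim y + slim y * slim x - slim x * slim y,
    (((slim_tendsto y).const_mul (slim x)).add
      ((slim_tendsto x).const_mul (slim y))).sub tendsto_const_nhds⟩⟩

def const (ξ : ℝ) : Rhat := ⟨fun _ => ξ, ⟨ξ, tendsto_const_nhds⟩⟩

noncomputable def shadow (x : Rhat) : Rhat := const (slim x)

noncomputable def dd (x : Rhat) : Rhat :=
  ⟨fun n => x.1 n - slim x, ⟨0, by
    simpa using (slim_tendsto x).sub (tendsto_const_nhds (x := slim x))⟩⟩

theorem slim_hadd (x y : Rhat) : slim (hadd x y) = slim x + slim y :=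
  Filter.Tendsto.limUnder_eq ((slim_tendsto x).add (slim_tendsto y))

theorem slim_hmul (x y : Rhat) : slim (hmul x y) = slim x * slim y := by
  have h : Tendsto (hmul x y).1 atTop
      (nhds (slim x * slim y + slim y * slim x - slim x * slim y)) :=
    (((slim_tendsto y).const_mul (slim x)).add
      ((slim_tendsto x).const_mul (slim y))).sub tendsto_const_nhds
  have h2 : slim x * slim y + slim y * slim x - slim x * slim y = slim x * slim y := by ring
  rw [h2] at h
  exact h.limUnder_eq

noncomputable def hpow (x : Rhat) : ℕ → Rhat
  | 0 => const 1
  | n + 1 => hmul (hpow x n) x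

theorem slim_eq_of_tendsto {x : Rhat} {l : ℝ} (h : Tendsto x.1 atTop (𝓝 l)) : slim x = l :=
  h.limUnder_eq

theorem slim_const (ξ : ℝ) : slim (const ξ) = ξ :=
  slim_eq_of_tendsto tendsto_const_nhds

theorem tendsto_zero_iff_slim_eq_zero (x : Rhat) : Tendsto x.1 atTop (𝓝 0) ↔ slim x = 0 :=
  ⟨slim_eq_of_tendsto, fun h => h ▸ slim_tendsto x⟩

theorem slim_ne_zero_of_hmul_eq_one {x y : Rhat} (h : hmul x y = const 1) : slim x ≠ 0 := by
  intro hx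
  have := congrArg slim h
  rw [slim_hmul, slim_const, hx, zero_mul] at this
  exact zero_ne_one this

theorem tendsto_hinvSeq (x : Rhat) :
    Tendsto (fun n => 1 / slim x - (x.1 n - slim x) / slim x ^ 2) atTop (𝓝 (1 / slim x)) := by
  simpa using tendsto_const_nhds.sub (((slim_tendsto x).sub_const (slim x)).div_const _)

theorem converges_hinvSeq (x : Rhat) :
    Converges (fun n => 1 / slim x - (x.1 n - slim x) / slim x ^ 2) :=
  ⟨_, tendsto_hinvSeq x⟩

noncomputable def hinv (x : Rhat) : Rhat :=
  ⟨fun n => 1 / slim x - (x.1 n - slim x) / slim x ^ 2, converges_hinvSeq x⟩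

theorem hmul_hinv {x : Rhat} (hx : slim x ≠ 0) : hmul x (hinv x) = const 1 := by
  have hlim : slim (hinv x) = 1 / slim x := slim_eq_of_tendsto (tendsto_hinvSeq x)
  apply Subtype.ext
  funext n
  change slim x * (1 / slim x - (x.1 n - slim x) / slim x ^ 2) + slim (hinv x) * x.1 n
    - slim x * slim (hinv x) = 1
  rw [hlim]
  field_simp
  ring

/-- x ∈ R̂ is invertible for ⋆ iff it is not infinitesimal, and in that case
the inverse is the (convergent) sequence n ↦ 1/(lim x) − (x_n − lim x)/(lim x)². -/
theorem invertible_iff_not_infinitesimal (x : Rhat) :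
    ((∃ y : Rhat, hmul x y = const 1) ↔ ¬ Tendsto x.1 atTop (nhds 0)) ∧
    (¬ Tendsto x.1 atTop (nhds 0) →
      ∃ h : Converges (fun n => 1 / slim x - (x.1 n - slim x) / (slim x) ^ 2),
        hmul x ⟨fun n => 1 / slim x - (x.1 n - slim x) / (slim x) ^ 2, h⟩ = const 1) := by
  rw [tendsto_zero_iff_slim_eq_zero]
  refine ⟨⟨fun ⟨_, hy⟩ => slim_ne_zero_of_hmul_eq_one hy, fun hx => ⟨hinv x, hmul_hinv hx⟩⟩,
    fun hx => ⟨converges_hinvSeq x, hmul_hinv hx⟩⟩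
end

section
/- The set m(0) of infinitesimals (real sequences converging to 0) is a nonzero ideal of the ring R̂ of convergent real sequences. -/
open Filter Topology

def infinitesimals : Set Rhat := {x : Rhat | Tendsto x.1 atTop (nhds 0)}

theorem slim_eq_zero_of_mem_infinitesimals {x : Rhat} (hx : x ∈ infinitesimals) : slim x = 0 :=
  Tendsto.limUnder_eq hx

theorem const_zero_mem_infinitesimals : const 0 ∈ infinitesimals :=
  tendsto_const_nhds

theorem hadd_mem_infinitesimals {x y : Rhat} (hx : x ∈ infinitesimals) (hy : y ∈ infinitesimals) :
    hadd x y ∈ infinitesimals := by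
  show Tendsto (fun n => x.1 n + y.1 n) atTop (𝓝 0)
  simpa using hx.add hy

theorem hmul_mem_infinitesimals (r : Rhat) {x : Rhat} (hx : x ∈ infinitesimals) :
    hmul r x ∈ infinitesimals := by
  show Tendsto (fun n => slim r * x.1 n + slim x * r.1 n - slim r * slim x) atTop (𝓝 0)
  simpa [slim_eq_zero_of_mem_infinitesimals hx] using hx.const_mul (slim r)

def hneg (x : Rhat) : Rhat :=
  ⟨fun n => -x.1 n, ⟨-slim x, (slim_tendsto x).neg⟩⟩

theorem hneg_mem_infinitesimals {x : Rhat} (hx : x ∈ infinitesimals) : hneg x ∈ infinitesimals := by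
  show Tendsto (fun n => -x.1 n) atTop (𝓝 0)
  simpa using hx.neg

theorem hadd_hneg (x : Rhat) : hadd x (hneg x) = const 0 :=
  Subtype.ext <| funext fun n => add_neg_cancel (x.1 n)

noncomputable def oneDivSucc : Rhat :=
  ⟨fun n => 1 / (n + 1), ⟨0, tendsto_one_div_add_atTop_nhds_zero_nat⟩⟩

theorem oneDivSucc_mem_infinitesimals : oneDivSucc ∈ infinitesimals :=
  tendsto_one_div_add_atTop_nhds_zero_nat

theorem oneDivSucc_ne_const_zero : oneDivSucc ≠ const 0 := fun h => by
  simpa [oneDivSucc, const] using congrArg (fun z : Rhat => z.1 0) h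

/-- the set of infinitesimals is a nonzero ideal of R̂. -/
theorem infinitesimals_nonzero_ideal :
    const 0 ∈ infinitesimals ∧
    (∃ x ∈ infinitesimals, x ≠ const 0) ∧
    (∀ x ∈ infinitesimals, ∀ y ∈ infinitesimals, hadd x y ∈ infinitesimals) ∧
    (∀ x ∈ infinitesimals, ∃ y ∈ infinitesimals, hadd x y = const 0) ∧
    (∀ r : Rhat, ∀ x ∈ infinitesimals, hmul r x ∈ infinitesimals) :=
  ⟨const_zero_mem_infinitesimals,
    ⟨oneDivSucc, oneDivSucc_mem_infinitesimals, oneDivSucc_ne_const_zero⟩,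
    fun _ hx _ hy => hadd_mem_infinitesimals hx hy,
    fun x hx => ⟨hneg x, hneg_mem_infinitesimals hx, hadd_hneg x⟩,
    fun r _ hx => hmul_mem_infinitesimals r hx⟩
end
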